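/- arXiv:2208.01926 — 9 statements merged into one kernel-verified Lean document; each statement's English description precedes it below -/
import Mathlib

section
/- Let Γ be a locally finite simple graph, F a field, λ ∈ F and v a vertex of Γ. Then the following are equivalent: (i) there exists an eigenfunction of A_{Γ,F} corresponding to λ whose support is finite and contains v; (ii) there exists no (F,λ)-propagator of Γ with respect to v. -/
open Function

/-- The adjacency operator of a locally finite simple graph over a field `F`:
`(adjOp G f) w = ∑_{u ∈ Γ(w)} f u`. -/
def adjOp {V F : Type*} (G : SimpleGraph V) [G.LocallyFinite] [Field F]
    (f : V → F) (w : V) : F :=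
  ∑ u ∈ G.neighborFinset w, f u

/-- An eigenfunction of the adjacency operator corresponding to `l`. -/
def IsEigenfun {V F : Type*} (G : SimpleGraph V) [G.LocallyFinite] [Field F]
    (l : F) (f : V → F) : Prop :=
  f ≠ 0 ∧ ∀ w, adjOp G f w = l * f w

/-- An `(F, l)`-propagator of `G` with respect to the vertex `v`. -/
def IsPropagator {V F : Type*} [DecidableEq V] (G : SimpleGraph V) [G.LocallyFinite] [Field F]
    (l : F) (v : V) (f : V → F) : Prop :=
  ∀ w, adjOp G f w - l * f w = if w = v then 1 else 0


/-!
Pairing `g : V → F` with `h : V →₀ F` by `∑ u, h u * g u` identifies `V → F` with the dual of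
`V →₀ F`, and since adjacency is symmetric, `A - λ` on `V → F` is the transpose of `A - λ` on
`V →₀ F`. So a propagator at `v` is a functional `ψ` with `ψ ∘ (A - λ) = eval_v`; over a field
such a `ψ` exists iff `eval_v` vanishes on the kernel of `A - λ` on `V →₀ F`, and an element of
that kernel not vanishing at `v` is precisely a finitely supported eigenfunction with `v` in its
support.
-/

open Finsupp

section FinitelySupported

variable {V F : Type*} (G : SimpleGraph V) [G.LocallyFinite] [Field F] (l : F)

noncomputable def adjSubFinsupp : (V →₀ F) →ₗ[F] (V →₀ F) :=
  linearCombination F fun u => (∑ x ∈ G.neighborFinset u, single x 1) - l • single u 1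

lemma adjSubFinsupp_single (u : V) :
    adjSubFinsupp G l (single u 1) = (∑ x ∈ G.neighborFinset u, single x 1) - l • single u 1 := by
  rw [adjSubFinsupp, linearCombination_single, one_smul]

lemma adjOp_add (f g : V → F) (w : V) : adjOp G (f + g) w = adjOp G f w + adjOp G g w :=
  Finset.sum_add_distrib

lemma adjSubFinsupp_apply (h : V →₀ F) (w : V) :
    adjSubFinsupp G l h w = adjOp G h w - l * h w := by
  classical
  induction h using Finsupp.induction_linear with
  | zero => simp [adjOp]
  | add f g hf hg =>
    rw [map_add, Finsupp.add_apply, hf, hg, coe_add, adjOp_add, Pi.add_apply]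
    ring
  | single u c =>
    simp only [adjSubFinsupp, smul_single, smul_eq_mul, mul_one, linearCombination_single,
      coe_smul, coe_sub, coe_finsetSum, Pi.smul_apply, Pi.sub_apply, Finset.sum_apply,
      single_apply, Finset.sum_ite_eq', SimpleGraph.mem_neighborFinset, G.adj_comm, adjOp,
      Finset.sum_ite_eq, mul_ite, mul_zero]
    split_ifs <;> ring

lemma linearCombination_comp_adjSubFinsupp (g : V → F) :
    linearCombination F g ∘ₗ adjSubFinsupp G l =
      linearCombination F fun w => adjOp G g w - l * g w := by
  ext u
  simp [adjSubFinsupp_single, adjOp]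

lemma isPropagator_iff [DecidableEq V] (v : V) (g : V → F) :
    IsPropagator G l v g ↔ linearCombination F g ∘ₗ adjSubFinsupp G l = lapply v := by
  rw [linearCombination_comp_adjSubFinsupp]
  constructor
  · intro hg
    ext w
    simp [hg w, single_apply, eq_comm]
  · intro hg w
    simpa [single_apply, eq_comm] using LinearMap.congr_fun hg (single w 1)

lemma linearCombination_single_one (ψ : (V →₀ F) →ₗ[F] F) :
    linearCombination F (fun u => ψ (single u 1)) = ψ := by
  ext; simp

lemma exists_isPropagator_iff [DecidableEq V] (v : V) :
    (∃ g, IsPropagator G l v g) ↔ lapply v ∈ LinearMap.range (adjSubFinsupp G l).dualMap := by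
  simp only [isPropagator_iff, LinearMap.mem_range, LinearMap.dualMap_apply']
  exact ⟨fun ⟨g, hg⟩ => ⟨_, hg⟩, fun ⟨ψ, hψ⟩ => ⟨_, by rwa [linearCombination_single_one]⟩⟩

lemma exists_isEigenfun_finite_iff (v : V) :
    (∃ f, IsEigenfun G l f ∧ (Function.support f).Finite ∧ v ∈ Function.support f) ↔
      ∃ h ∈ LinearMap.ker (adjSubFinsupp G l), h v ≠ 0 := by
  simp only [LinearMap.mem_ker, Finsupp.ext_iff, adjSubFinsupp_apply, Finsupp.coe_zero,
    Pi.zero_apply, sub_eq_zero]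
  constructor
  · rintro ⟨f, ⟨-, hf⟩, hfin, hv⟩
    exact ⟨ofSupportFinite f hfin, hf, hv⟩
  · rintro ⟨h, hh, hv⟩
    exact ⟨h, ⟨fun h0 => hv (congrFun h0 v), hh⟩, h.hasFiniteSupport, hv⟩

end FinitelySupported

theorem stmt0 {V F : Type*} [DecidableEq V] (G : SimpleGraph V) [G.LocallyFinite] [Field F]
    (l : F) (v : V) :
    (∃ f : V → F, IsEigenfun G l f ∧ (support f).Finite ∧ v ∈ support f) ↔
      ¬ ∃ f : V → F, IsPropagator G l v f := by
  rw [exists_isEigenfun_finite_iff, exists_isPropagator_iff,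
    LinearMap.range_dualMap_eq_dualAnnihilator_ker, Submodule.mem_dualAnnihilator]
  simp
end

section
/- Let Γ be a locally finite simple graph, F a field, λ ∈ F and v a vertex of Γ. Then the following are equivalent: (i) v does not belong to the support of any eigenfunction of A_{Γ,F} corresponding to λ; (ii) there exists an (F,λ)-propagator of Γ with respect to v whose support is finite. -/
open Function

/-! Pairing `f : V → F` with `g : V →₀ F` by `∑ w, g w * f w` identifies `V → F` with the dual
of `V →₀ F`, and since adjacency is symmetric, `A - λ` on `V → F` is the transpose of `A - λ`
on `V →₀ F`. So the eigenfunctions for `λ` are the nonzero functionals vanishing on the range of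
`A - λ` on `V →₀ F`, while a finitely supported propagator at `v` is a preimage of `δ_v` in that
range. Over a field, `δ_v` lies in a subspace iff every functional vanishing on the subspace
vanishes at `δ_v`. -/

namespace Finsupp

theorem linearCombination_self_eq_zero_iff {α R : Type*} [CommSemiring R] {f : α → R} :
    linearCombination R f = 0 ↔ f = 0 := by
  refine ⟨fun h => funext fun a => ?_, fun h => by simp [h]⟩
  simpa using LinearMap.congr_fun h (single a 1)

theorem forall_linearCombination_iff_forall_dual {α R M : Type*} [CommSemiring R]
    [AddCommMonoid M] [Module R M] (T : M →ₗ[R] α →₀ R) (a : α) :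
    (∀ f : α → R, linearCombination R f ∘ₗ T = 0 → f a = 0) ↔
      ∀ φ : Module.Dual R (α →₀ R), φ ∈ (LinearMap.range T).dualAnnihilator →
        φ (single a 1) = 0 := by
  simp only [← LinearMap.ker_dualMap_eq_dualAnnihilator_range, LinearMap.mem_ker,
    LinearMap.dualMap_apply']
  refine ⟨fun h φ hφ => ?_, fun h f hf => by simpa using h _ hf⟩
  have hφ_eq : linearCombination R (fun w => φ (single w 1)) = φ := by ext; simp
  exact h _ (hφ_eq ▸ hφ)

end Finsupp

namespace SimpleGraph

open Finsupp

variable {V F : Type*} (G : SimpleGraph V) [G.LocallyFinite] [Field F]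

noncomputable def adjFinsupp : Module.End F (V →₀ F) :=
  linearCombination F fun u => ∑ w ∈ G.neighborFinset u, single w 1

theorem coe_adjFinsupp (g : V →₀ F) : ⇑(G.adjFinsupp g) = adjOp G g := by
  induction g using Finsupp.induction_linear with
  | zero => ext; simp [adjOp]
  | add g h hg hh => ext w; simp [hg, hh, adjOp, Finset.sum_add_distrib]
  | single u c =>
    classical
    ext w
    simp [adjFinsupp, adjOp, single_apply, G.adj_comm]

variable (l : F)

noncomputable def adjFinsuppSub : Module.End F (V →₀ F) :=
  G.adjFinsupp - l • 1

@[simp]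
theorem adjFinsuppSub_apply (g : V →₀ F) : G.adjFinsuppSub l g = G.adjFinsupp g - l • g :=
  rfl

theorem linearCombination_comp_adjFinsuppSub (f : V → F) :
    linearCombination F f ∘ₗ G.adjFinsuppSub l =
      linearCombination F (fun w => adjOp G f w - l * f w) := by
  ext u
  simp [adjFinsupp, adjOp]

theorem isPropagator_iff [DecidableEq V] (v : V) (g : V →₀ F) :
    IsPropagator G l v g ↔ G.adjFinsuppSub l g = single v 1 := by
  simp only [IsPropagator, Finsupp.ext_iff, adjFinsuppSub_apply, coe_sub, coe_smul, Pi.sub_apply,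
    Pi.smul_apply, smul_eq_mul, coe_adjFinsupp, single_apply, eq_comm (a := v)]

theorem exists_isPropagator_iff_mem_range [DecidableEq V] (v : V) :
    (∃ f : V → F, IsPropagator G l v f ∧ (Function.support f).Finite) ↔
      single v 1 ∈ LinearMap.range (G.adjFinsuppSub l) := by
  constructor
  · rintro ⟨f, hf, hfin⟩
    exact ⟨ofSupportFinite f hfin, (G.isPropagator_iff l v _).1 hf⟩
  · rintro ⟨g, hg⟩
    exact ⟨g, (G.isPropagator_iff l v g).2 hg, g.hasFiniteSupport⟩

theorem forall_isEigenfun_notMem_support_iff (v : V) :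
    (∀ f : V → F, IsEigenfun G l f → v ∉ Function.support f) ↔
      ∀ f : V → F, linearCombination F f ∘ₗ G.adjFinsuppSub l = 0 → f v = 0 := by
  simp only [linearCombination_comp_adjFinsuppSub, linearCombination_self_eq_zero_iff,
    funext_iff, Pi.zero_apply, sub_eq_zero, IsEigenfun, Function.mem_support, not_not, and_imp]
  refine forall_congr' fun f => ⟨fun h hf => ?_, fun h _ => h⟩
  by_cases h0 : f = 0
  · simp [h0]
  · exact h h0 hf

end SimpleGraph

theorem stmt1 {V F : Type*} [DecidableEq V] (G : SimpleGraph V) [G.LocallyFinite] [Field F]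
    (l : F) (v : V) :
    (∀ f : V → F, IsEigenfun G l f → v ∉ support f) ↔
      ∃ f : V → F, IsPropagator G l v f ∧ (support f).Finite := by
  rw [G.forall_isEigenfun_notMem_support_iff, Finsupp.forall_linearCombination_iff_forall_dual,
    Subspace.forall_mem_dualAnnihilator_apply_eq_zero_iff, G.exists_isPropagator_iff_mem_range]
end

section
/- Let Γ be a locally finite simple graph, F a field and λ ∈ F. If the set S_{F,λ}(Γ) is infinite, then there exists an eigenfunction of A_{Γ,F} corresponding to λ whose support is infinite and contained in S_{F,λ}(Γ). -/
/-
Let `E ⊆ V →₀ F` be the space of finitely supported `λ`-eigenfunctions. Functions `V → F` form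
the algebraic dual of `V →₀ F`, and under this duality `A - λ` is its own transpose. Since the
range of a dual map is the annihilator of the kernel, a propagator at `v` exists iff every member
of `E` vanishes at `v`, so `S` is the union of the supports of the members of `E`. If `S` is
infinite, then `E` is infinite-dimensional, hence for every finite `T` some nonzero member of `E`
vanishes on `T`. This yields members of `E` with pairwise disjoint supports; their pointwise sum
is a locally finite sum of eigenfunctions, hence an eigenfunction, with infinite support in `S`.
-/

open Function

namespace Submodule

open Finsupp

lemma finite_setOf_exists_apply_ne_zero {V R M : Type*} [Semiring R] [AddCommMonoid M]
    [Module R M] {K : Submodule R (V →₀ M)} (hK : K.FG) : {v | ∃ g ∈ K, g v ≠ 0}.Finite := by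
  obtain ⟨s, rfl⟩ := hK
  refine (s.finite_toSet.biUnion fun g _ => g.support.finite_toSet).subset ?_
  rintro v ⟨g, hg, hgv⟩
  have hspan : span R ↑s ≤ supported M R (⋃ g ∈ s, (g.support : Set V)) :=
    span_le.2 fun g hg => (mem_supported R g).2
      (Set.subset_biUnion_of_mem (u := fun g : V →₀ M => (g.support : Set V)) hg)
  exact (mem_supported R g).1 (hspan hg) (mem_support_iff.2 hgv)

lemma exists_ne_zero_disjoint_support {V F : Type*} [Field F] (K : Submodule F (V →₀ F))
    (hK : {v | ∃ g ∈ K, g v ≠ 0}.Infinite) (T : Finset V) :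
    ∃ g ∈ K, g ≠ 0 ∧ Disjoint g.support T := by
  by_contra! H
  let r : K →ₗ[F] (T → F) := LinearMap.pi (fun t : T => lapply t.1) ∘ₗ K.subtype
  have hr : Function.Injective r := fun a b hab => by
    by_contra hne
    refine H (a - b : K) (a - b).2 (by simpa [sub_eq_zero] using hne)
      (Finset.disjoint_left.2 fun v hv hvT => mem_support_iff.1 hv ?_)
    simpa [r, sub_eq_zero] using congr_fun hab ⟨v, hvT⟩
  have : Module.Finite F K := Module.Finite.of_injective r hr
  exact hK (finite_setOf_exists_apply_ne_zero (Module.Finite.iff_fg.1 this))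

end Submodule

lemma Finset.exists_seq_pairwise_disjoint {α β : Type*} {P : β → Prop} (s : β → Finset α)
    (h : ∀ T : Finset α, ∃ b, P b ∧ Disjoint (s b) T) :
    ∃ b : ℕ → β, (∀ n, P (b n)) ∧ Pairwise (Disjoint on fun n => s (b n)) := by
  classical
  choose c hcP hcT using h
  let T : ℕ → Finset α := fun n => Nat.rec ∅ (fun _ Tn => Tn ∪ s (c Tn)) n
  have hT : Monotone T := monotone_nat_of_le_succ fun n => Finset.subset_union_left
  refine ⟨fun n => c (T n), fun n => hcP _, (pairwise_disjoint_on _).2 fun m n hmn => ?_⟩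
  exact (hcT (T n)).symm.mono_left (Finset.subset_union_right.trans (hT hmn))

namespace Finsupp

lemma subsingleton_support_apply {ι V M : Type*} [AddCommMonoid M] {g : ι → V →₀ M}
    (hg : Pairwise (Disjoint on fun i => (g i).support)) (v : V) :
    (Function.support fun i => g i v).Subsingleton := fun i hi j hj => by
  by_contra hij
  exact Finset.disjoint_left.1 (hg hij) (mem_support_iff.2 hi) (mem_support_iff.2 hj)

lemma support_finsum_of_pairwise_disjoint {ι V M : Type*} [AddCommMonoid M]
    {g : ι → V →₀ M} (hg : Pairwise (Disjoint on fun i => (g i).support)) :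
    Function.support (fun v => ∑ᶠ i, g i v) = ⋃ i, ↑(g i).support := by
  ext v
  simp only [Function.mem_support, Set.mem_iUnion, Finset.mem_coe, mem_support_iff]
  constructor
  · intro hv
    by_contra! h
    exact hv (finsum_eq_zero_of_forall_eq_zero h)
  · rintro ⟨i, hi⟩
    rwa [finsum_eq_single _ i fun j hj => notMem_support_iff.1 fun hjv =>
      Finset.disjoint_left.1 (hg hj) hjv (mem_support_iff.2 hi)]

end Finsupp

namespace SimpleGraph

open Finsupp

variable {V F : Type*} (G : SimpleGraph V) [G.LocallyFinite] [Field F]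

noncomputable def finAdj : Module.End F (V →₀ F) :=
  linearCombination F fun u => ∑ w ∈ G.neighborFinset u, single w 1

lemma finAdj_single (u : V) :
    G.finAdj (single u 1) = ∑ w ∈ G.neighborFinset u, single w (1 : F) := by
  simp [finAdj]

lemma finAdj_apply (g : V →₀ F) (w : V) : G.finAdj g w = adjOp G g w := by
  classical
  induction g using Finsupp.induction_linear with
  | zero => simp [adjOp]
  | add g₁ g₂ h₁ h₂ => simp [h₁, h₂, adjOp, Finset.sum_add_distrib]
  | single u c =>
    rw [← smul_single_one, map_smul, finAdj_single]
    simp [adjOp, single_apply, Finset.sum_ite_eq, adj_comm]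

lemma mem_eigenspace_finAdj_iff {l : F} {g : V →₀ F} :
    g ∈ G.finAdj.eigenspace l ↔ ∀ w, adjOp G g w = l * g w := by
  simp [Finsupp.ext_iff, finAdj_apply]

lemma linearCombination_comp_finAdj_sub_smul (f : V → F) (l : F) :
    linearCombination F f ∘ₗ (G.finAdj - l • 1 : Module.End F (V →₀ F)) =
      linearCombination F fun w => adjOp G f w - l * f w := by
  refine lhom_ext' fun u => LinearMap.ext_ring ?_
  simp [finAdj_single, adjOp, map_sum]

lemma adjOp_finsum {ι : Type*} (g : ι → V → F)
    (hg : ∀ v, (Function.support fun i => g i v).Finite) (w : V) :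
    adjOp G (fun v => ∑ᶠ i, g i v) w = ∑ᶠ i, adjOp G (g i) w :=
  sum_finsum_comm _ _ fun v _ => hg v

variable [DecidableEq V]

lemma isPropagator_iff_linearCombination_comp {l : F} {v : V} {f : V → F} :
    IsPropagator G l v f ↔
      linearCombination F f ∘ₗ (G.finAdj - l • 1 : Module.End F (V →₀ F)) = lapply v := by
  rw [linearCombination_comp_finAdj_sub_smul]
  constructor
  · intro hf
    refine lhom_ext' fun u => LinearMap.ext_ring ?_
    simp [hf u, single_apply, eq_comm]
  · intro h w
    simpa [single_apply, eq_comm] using LinearMap.congr_fun h (single w 1)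

theorem exists_isPropagator_iff (l : F) (v : V) :
    (∃ f, IsPropagator G l v f) ↔ ∀ g ∈ G.finAdj.eigenspace l, g v = 0 := by
  have hdual : (∀ g ∈ G.finAdj.eigenspace l, g v = 0) ↔
      lapply v ∈ LinearMap.range
        (LinearMap.dualMap (G.finAdj - l • 1 : Module.End F (V →₀ F))) := by
    rw [LinearMap.range_dualMap_eq_dualAnnihilator_ker, Submodule.mem_dualAnnihilator,
      Module.End.eigenspace_def]
    rfl
  simp_rw [hdual, isPropagator_iff_linearCombination_comp, LinearMap.mem_range]
  constructor
  · rintro ⟨f, hf⟩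
    exact ⟨linearCombination F f, hf⟩
  · rintro ⟨ψ, hψ⟩
    refine ⟨fun u => ψ (single u 1), ?_⟩
    rw [← hψ, LinearMap.dualMap_apply']
    congr 1
    exact lhom_ext' fun u => LinearMap.ext_ring (by simp)

end SimpleGraph

theorem stmt5 {V F : Type*} [DecidableEq V] (G : SimpleGraph V) [G.LocallyFinite] [Field F]
    (l : F)
    (h : {v : V | ¬ ∃ f : V → F, IsPropagator G l v f}.Infinite) :
    ∃ f : V → F, IsEigenfun G l f ∧ (support f).Infinite ∧
      support f ⊆ {v : V | ¬ ∃ g : V → F, IsPropagator G l v g} := by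
  set E := G.finAdj.eigenspace l
  have hS : {v : V | ¬ ∃ f : V → F, IsPropagator G l v f} = {v | ∃ g ∈ E, g v ≠ 0} := by
    ext v
    simp [E, G.exists_isPropagator_iff]
  rw [hS] at h ⊢
  obtain ⟨g, hgE, hdisj⟩ := Finset.exists_seq_pairwise_disjoint (P := fun g => g ∈ E ∧ g ≠ 0)
    Finsupp.support fun T => by
      obtain ⟨g, hg, hg0, hgT⟩ := E.exists_ne_zero_disjoint_support h T
      exact ⟨g, ⟨hg, hg0⟩, hgT⟩
  have hsupp := Finsupp.support_finsum_of_pairwise_disjoint hdisj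
  have hinf : (support fun v => ∑ᶠ n, g n v).Infinite := by
    rw [hsupp]
    refine Set.infinite_iUnion fun m n hmn => ?_
    by_contra hne
    exact (hdisj hne).ne (by simpa using (hgE m).2) (Finset.coe_injective hmn)
  refine ⟨_, ⟨fun h0 => hinf (by simp [h0]), fun w => ?_⟩, hinf, ?_⟩
  · rw [G.adjOp_finsum _ fun v => (Finsupp.subsingleton_support_apply hdisj v).finite,
      mul_finsum]
    exact finsum_congr fun n => G.mem_eigenspace_finAdj_iff.1 (hgE n).1 w
  · rw [hsupp]
    rintro v ⟨_, ⟨n, rfl⟩, hv⟩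
    exact ⟨g n, (hgE n).1, Finsupp.mem_support_iff.1 hv⟩
end

section
/- Let Γ be an infinite, locally finite, connected simple graph, let F be a field of characteristic 0, and let λ ∈ F be transcendental over the prime subfield ℚ of F. Then λ is an eigenvalue of the adjacency operator A_{Γ,F}: there exists a nonzero function f : V(Γ) → F such that for every vertex w, ∑_{u adjacent to w} f(u) = λ·f(w). -/
open Function

/-!
Suppose there is no eigenfunction for `λ`. Since `λ⁻¹` is transcendental, `X ↦ λ⁻¹` embeds `ℚ(X)`
into `F`, and eigenfunctions push forward along field embeddings, so there is none for `X⁻¹` over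
`ℚ(X)` either. By linear duality, `(A - X⁻¹) c = δ_v` then has a finitely supported solution `c`
over `ℚ(X)`, hence over `ℚ((X))`. Over `ℚ((X))` the walk generating function
`g_w = -∑ₙ (Aⁿ δ_w) X^{n+1}` also solves `(A - X⁻¹) g_w = δ_w`, and it vanishes nowhere on a
connected graph. Symmetry of `A` gives `c w = g_w v`, which is absurd for `w` outside the support
of `c`, and such `w` exists because the graph is infinite.
-/

open scoped LaurentSeries RatFunc

section

variable {V : Type*} (G : SimpleGraph V) [G.LocallyFinite]

section Map

variable {k K : Type*} [Field k] [Field K] (σ : k →+* K)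

lemma map_adjOp (f : V → k) (w : V) : σ (adjOp G f w) = adjOp G (σ ∘ f) w :=
  map_sum σ f _

lemma IsEigenfun.map {μ : k} {f : V → k} (hf : IsEigenfun G μ f) :
    IsEigenfun G (σ μ) (σ ∘ f) := by
  refine ⟨fun h => hf.1 (funext fun u => σ.injective ?_), fun w => ?_⟩
  · simpa using congrFun h u
  · rw [← map_adjOp, hf.2 w, map_mul, comp_apply]

lemma IsPropagator.map [DecidableEq V] {μ : k} {v : V} {f : V → k}
    (hf : IsPropagator G μ v f) : IsPropagator G (σ μ) v (σ ∘ f) := fun w => by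
  rw [← map_adjOp, comp_apply, ← map_mul, ← map_sub, hf w]
  split_ifs <;> simp

end Map

lemma sum_neighborFinset_eq_sum_ite [DecidableRel G.Adj] {M : Type*} [AddCommMonoid M]
    (s : Finset V) (u : V) (f : V → M) (hf : ∀ w ∈ G.neighborFinset u, w ∉ s → f w = 0) :
    ∑ w ∈ G.neighborFinset u, f w = ∑ w ∈ s, if G.Adj u w then f w else 0 := by
  rw [← Finset.sum_filter]
  refine (Finset.sum_subset (fun w hw => ?_) fun w hw hws => hf w hw fun h => hws ?_).symm
  · simpa using (Finset.mem_filter.mp hw).2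
  · exact Finset.mem_filter.mpr ⟨h, (G.mem_neighborFinset u w).mp hw⟩

section Field

variable {k : Type*} [Field k]

lemma sum_mul_adjOp_comm (s : Finset V) (a b : V → k) (ha : ∀ u ∉ s, a u = 0)
    (hs : ∀ u, a u ≠ 0 → G.neighborFinset u ⊆ s) :
    ∑ u ∈ s, a u * adjOp G b u = ∑ u ∈ s, b u * adjOp G a u := by
  classical
  have lhs (u : V) : a u * adjOp G b u = ∑ w ∈ s, if G.Adj u w then a u * b w else 0 := by
    rw [adjOp, Finset.mul_sum]
    refine sum_neighborFinset_eq_sum_ite G s u _ fun w hw hws => ?_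
    by_cases hu : a u = 0
    · rw [hu, zero_mul]
    · exact absurd (hs u hu hw) hws
  have rhs (u : V) : b u * adjOp G a u = ∑ w ∈ s, if G.Adj u w then b u * a w else 0 := by
    rw [adjOp, Finset.mul_sum]
    exact sum_neighborFinset_eq_sum_ite G s u _ fun w _ hws => by rw [ha w hws, mul_zero]
  simp only [lhs, rhs]
  rw [Finset.sum_comm]
  refine Finset.sum_congr rfl fun u _ => Finset.sum_congr rfl fun w _ => ?_
  rw [G.adj_comm, mul_comm]

variable [DecidableEq V]

lemma IsPropagator.apply_eq_apply {μ : k} {v w : V} {c g : V → k} (s : Finset V)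
    (hcs : ∀ u ∉ s, c u = 0) (hc : IsPropagator G μ w c) (hg : IsPropagator G μ v g) :
    c v = g w := by
  set t := insert v (insert w (s ∪ s.biUnion fun u => G.neighborFinset u))
  have hct : ∀ u ∉ t, c u = 0 := fun u hu => hcs u fun h => hu (by simp [t, h])
  have hnt : ∀ u, c u ≠ 0 → G.neighborFinset u ⊆ t := fun u hu x hx => by
    have : u ∈ s := by_contra fun h => hu (hcs u h)
    simp only [t, Finset.mem_insert, Finset.mem_union, Finset.mem_biUnion]
    exact Or.inr (Or.inr (Or.inr ⟨u, this, hx⟩))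
  have key : ∑ u ∈ t, c u * (adjOp G g u - μ * g u) = ∑ u ∈ t, g u * (adjOp G c u - μ * c u) := by
    simp only [mul_sub, Finset.sum_sub_distrib, sum_mul_adjOp_comm G t c g hct hnt]
    congr 1
    exact Finset.sum_congr rfl fun u _ => by ring
  simpa [hg _, hc _, t] using key

/-- Either `δ_v` is a finite combination of the rows of `A - μ`, or some functional on `V →₀ k`
kills every row but not `δ_v`; read as a function on `V`, that functional is an eigenfunction. -/
lemma exists_finsupp_isPropagator {μ : k} (h : ∀ f, ¬ IsEigenfun G μ f) (v : V) :
    ∃ c : V →₀ k, IsPropagator G μ v c := by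
  classical
  set row : V → V →₀ k := fun w =>
    ∑ u ∈ G.neighborFinset w, Finsupp.single u 1 - μ • Finsupp.single w 1
  have row_apply (w x : V) :
      row w x = (if G.Adj x w then 1 else 0) - μ * if w = x then 1 else 0 := by
    simp [row, Finsupp.single_apply, G.adj_comm]
  by_cases hv : Finsupp.single v 1 ∈ Submodule.span k (Set.range row)
  · obtain ⟨d, hd⟩ := Finsupp.mem_span_range_iff_exists_finsupp.mp hv
    refine ⟨d, fun x => ?_⟩
    have hadj : adjOp G d x = ∑ w ∈ d.support, d w * if G.Adj x w then 1 else 0 := by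
      simp only [mul_ite, mul_one, mul_zero]
      exact sum_neighborFinset_eq_sum_ite G _ x d fun w _ hw => Finsupp.notMem_support_iff.mp hw
    have hdiag : μ * d x = ∑ w ∈ d.support, d w * (μ * if w = x then 1 else 0) := by
      simp only [mul_ite, mul_one, mul_zero, Finset.sum_ite_eq', Finsupp.mem_support_iff]
      split_ifs with hx
      · ring
      · simp [not_not.mp hx]
    have hcomb := DFunLike.congr_fun hd x
    simp only [Finsupp.sum_apply, Finsupp.smul_apply, smul_eq_mul, row_apply, mul_sub] at hcomb
    rw [Finsupp.sum] at hcomb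
    rw [hadj, hdiag, ← Finset.sum_sub_distrib, hcomb, Finsupp.single_apply]
    simp only [eq_comm]
  · obtain ⟨φ, hφv, hφ⟩ := Submodule.exists_dual_map_eq_bot_of_notMem hv inferInstance
    refine absurd ⟨fun h0 => hφv (congrFun h0 v), fun w => ?_⟩ (h fun u => φ (Finsupp.single u 1))
    have : φ (row w) = 0 := LinearMap.le_ker_iff_map.mpr hφ (Submodule.subset_span ⟨w, rfl⟩)
    simp only [row, map_sub, map_sum, map_smul, smul_eq_mul, sub_eq_zero] at this
    exact this

end Field

noncomputable section Walks

variable [DecidableEq V]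

/-- `walkCount G v n w` is the number of walks of length `n` from `w` to `v`. -/
def walkCount (v : V) (n : ℕ) : V → ℚ := (adjOp G)^[n] (Pi.single v 1)

lemma walkCount_zero (v : V) : walkCount G v 0 = Pi.single v 1 := rfl

lemma walkCount_succ (v : V) (n : ℕ) : walkCount G v (n + 1) = adjOp G (walkCount G v n) :=
  iterate_succ_apply' _ _ _

lemma walkCount_nonneg (v : V) (n : ℕ) (w : V) : 0 ≤ walkCount G v n w := by
  induction n generalizing w with
  | zero => by_cases h : w = v <;> simp [walkCount_zero, h]
  | succ n ih => rw [walkCount_succ]; exact Finset.sum_nonneg fun u _ => ih u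

lemma exists_walkCount_pos {v w : V} (h : G.Reachable w v) : ∃ n, 0 < walkCount G v n w := by
  obtain ⟨p⟩ := h
  induction p with
  | nil => exact ⟨0, by simp [walkCount_zero]⟩
  | @cons w x _ hadj _ ih =>
    obtain ⟨n, hn⟩ := ih
    refine ⟨n + 1, ?_⟩
    rw [walkCount_succ]
    exact Finset.sum_pos' (fun u _ => walkCount_nonneg G _ n u)
      ⟨x, (G.mem_neighborFinset w x).mpr hadj, hn⟩

def walkSeries (v w : V) : PowerSeries ℚ := PowerSeries.mk fun n => walkCount G v n w

lemma walkSeries_eq (v w : V) :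
    walkSeries G v w = PowerSeries.C (if w = v then 1 else 0)
      + PowerSeries.X * ∑ u ∈ G.neighborFinset w, walkSeries G v u := by
  ext (_ | n)
  · simp [walkSeries, walkCount_zero, Pi.single_apply]
  · simp [walkSeries, walkCount_succ, adjOp, PowerSeries.coeff_succ_X_mul, map_sum,
      apply_ite (PowerSeries.coeff _), PowerSeries.coeff_one]

/-- The resolvent `(A - X⁻¹)⁻¹ δ_v = -∑ₙ (Aⁿ δ_v) X^{n+1}`, expanded at `X = 0`. -/
def greenSeries (v w : V) : ℚ⸨X⸩ := -(HahnSeries.single 1 1 * (walkSeries G v w : ℚ⸨X⸩))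

lemma isPropagator_greenSeries (v : V) :
    IsPropagator G (HahnSeries.single (-1) 1) v (greenSeries G v) := fun w => by
  have h := congrArg (HahnSeries.ofPowerSeries ℤ ℚ) (walkSeries_eq G v w)
  simp only [map_add, map_mul, map_sum, PowerSeries.coe_X, HahnSeries.ofPowerSeries_C,
    apply_ite HahnSeries.C, map_one, map_zero] at h
  have hinv : (HahnSeries.single (-1) 1 : ℚ⸨X⸩) * HahnSeries.single 1 1 = 1 := by
    simp [HahnSeries.single_mul_single]
  simp only [greenSeries, adjOp, Finset.sum_neg_distrib, ← Finset.mul_sum]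
  linear_combination h + (walkSeries G v w : ℚ⸨X⸩) * hinv

lemma greenSeries_ne_zero {v w : V} (h : G.Reachable w v) : greenSeries G v w ≠ 0 := by
  obtain ⟨n, hn⟩ := exists_walkCount_pos G h
  rw [greenSeries, neg_ne_zero]
  refine mul_ne_zero (HahnSeries.single_ne_zero one_ne_zero) fun h0 => hn.ne' ?_
  have := congrArg (PowerSeries.coeff n)
    (HahnSeries.ofPowerSeries_injective (h0.trans (map_zero _).symm))
  simpa [walkSeries] using this

end Walks

lemma not_isPropagator_of_finite_support [DecidableEq V] [Infinite V] (hG : G.Preconnected)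
    (v : V) (c : V → ℚ⸨X⸩) (s : Finset V) (hs : ∀ u ∉ s, c u = 0) :
    ¬ IsPropagator G (HahnSeries.single (-1) 1) v c := fun hc => by
  obtain ⟨w, hw⟩ := Infinite.exists_notMem_finset s
  apply greenSeries_ne_zero G (hG v w)
  rw [← hc.apply_eq_apply G s hs (isPropagator_greenSeries G w)]
  exact hs w hw

end

theorem stmt10 {V F : Type*} [Infinite V] (G : SimpleGraph V) [G.LocallyFinite]
    (hconn : G.Connected) [Field F] [CharZero F]
    (l : F) (hl : Transcendental ℚ l) :
    ∃ f : V → F, f ≠ 0 ∧ ∀ w, adjOp G f w = l * f w := by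
  classical
  by_contra hno
  obtain ⟨v⟩ := Infinite.nonempty V
  have hl' : Transcendental ℚ l⁻¹ := fun h => hl (IsAlgebraic.inv_iff.mp h)
  let φ : RatFunc ℚ →+* F :=
    (IntermediateField.val _).toRingHom.comp (RatFunc.algEquivOfTranscendental l⁻¹ hl').toRingHom
  have hφ : φ RatFunc.X⁻¹ = l := by simp [φ, RatFunc.algEquivOfTranscendental_X]
  obtain ⟨c, hc⟩ := exists_finsupp_isPropagator G (μ := RatFunc.X⁻¹)
    (fun f hf => hno ⟨_, hφ ▸ hf.map G φ⟩) v
  have hX : algebraMap (RatFunc ℚ) ℚ⸨X⸩ RatFunc.X⁻¹ = HahnSeries.single (-1) 1 := by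
    simp [map_inv₀, RatFunc.coe_X, HahnSeries.inv_single]
  refine not_isPropagator_of_finite_support G hconn.preconnected v _ c.support ?_ (hX ▸ hc.map G _)
  intro u hu
  simp [Finsupp.notMem_support_iff.mp hu]
end

section
/- Let Γ be a connected simple graph all of whose vertex degrees are at most a natural number d, let v be a vertex of Γ, and let λ ∈ ℂ be such that λ is not a real number of the interval [−d, d]. Then there exists exactly one function f : V(Γ) → ℂ which is square-summable (∑_{w ∈ V(Γ)} |f(w)|² < ∞) and is a (ℂ,λ)-propagator of Γ with respect to v. -/
open Function

/-!
The adjacency operator `A` maps `ℓ²(V)` to itself with `‖A‖ ≤ d`: by Cauchy–Schwarz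
`|A f (w)|² ≤ d ∑_{u ∼ w} |f u|²`, and summing over `w` counts every `|f u|²` at most `d` times.
The same double counting makes `∑_{u ∼ w} conj (f u) g w` absolutely summable over pairs of
neighbours, so `A` is symmetric, hence self-adjoint. Its spectrum is therefore contained in
`[-d, d]`, and for `λ` outside this interval `A - λ` is a bijection of `ℓ²(V)`. A square-summable
propagator is exactly a solution in `ℓ²(V)` of `(A - λ) f = δ_v`.
-/

open scoped lp ComplexConjugate InnerProductSpace

theorem memℓp_two_iff_summable_sq {ι E : Type*} [NormedAddCommGroup E] (f : ι → E) :
    Memℓp f 2 ↔ Summable fun i => ‖f i‖ ^ 2 := by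
  rw [memℓp_gen_iff (by norm_num)]
  norm_num

theorem lp.norm_sq_eq_tsum_norm_sq {ι E : Type*} [NormedAddCommGroup E] (f : ℓ²(ι, E)) :
    ‖f‖ ^ 2 = ∑' i, ‖f i‖ ^ 2 := by
  simpa using lp.norm_rpow_eq_tsum (p := 2) (by norm_num) f

theorem IsSelfAdjoint.notMem_spectrum_of_norm_le {A : Type*} [CStarAlgebra A] {a : A}
    (ha : IsSelfAdjoint a) {r : ℝ} (hr : ‖a‖ ≤ r) {z : ℂ}
    (hz : ¬ (z.im = 0 ∧ -r ≤ z.re ∧ z.re ≤ r)) : z ∉ spectrum ℂ a := by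
  intro hmem
  obtain _ | _ := subsingleton_or_nontrivial A
  · simp [spectrum.of_subsingleton] at hmem
  have hz_real : z = z.re := ha.mem_spectrum_eq_re hmem
  have hz_le : |z.re| ≤ r := by
    rw [← Real.norm_eq_abs, ← Complex.norm_real, ← hz_real]
    exact (spectrum.norm_le_norm_of_mem hmem).trans hr
  exact hz ⟨by rw [hz_real]; simp, abs_le.1 hz_le⟩

namespace SimpleGraph

variable {V : Type*} {G : SimpleGraph V} [G.LocallyFinite] {d : ℕ}

section DecidableAdj

variable [DecidableRel G.Adj]

variable (G) in
theorem hasSum_ite_adj {E : Type*} [AddCommMonoid E] [TopologicalSpace E] (c : V → E) (w : V) :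
    HasSum (fun u => if G.Adj w u then c u else 0) (∑ u ∈ G.neighborFinset w, c u) := by
  have : HasSum (fun u => if G.Adj w u then c u else 0) _ :=
    hasSum_sum_of_ne_finset_zero (s := G.neighborFinset w) (by simp +contextual)
  rwa [Finset.sum_congr rfl fun u hu => if_pos ((G.mem_neighborFinset w u).1 hu)] at this

theorem summable_ite_adj_prod (hdeg : ∀ u, G.degree u ≤ d) {g : V → ℝ} (hg : 0 ≤ g)
    (hgs : Summable g) :
    Summable (fun p : V × V => if G.Adj p.1 p.2 then g p.2 else 0) ∧
      ∑' p : V × V, (if G.Adj p.1 p.2 then g p.2 else 0) ≤ d * ∑' u, g u := by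
  -- `Q` is the same sum with the coordinates swapped: its row at `u` has `degree u` equal entries.
  set Q : V × V → ℝ := fun p => if G.Adj p.2 p.1 then g p.1 else 0
  have hQ_nonneg : 0 ≤ Q := fun p => by dsimp only [Q]; split_ifs; exacts [hg _, le_rfl]
  have hrow (u : V) : HasSum (fun w => Q (u, w)) (G.degree u * g u) := by
    convert G.hasSum_ite_adj (fun _ => g u) u using 1
    · simp [Q, G.adj_comm]
    · simp [card_neighborFinset_eq_degree]
  have hrow_le (u : V) : G.degree u * g u ≤ d * g u :=
    mul_le_mul_of_nonneg_right (by exact_mod_cast hdeg u) (hg u)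
  have hdeg_summable : Summable fun u => G.degree u * g u :=
    (hgs.mul_left (d : ℝ)).of_nonneg_of_le (fun u => mul_nonneg (Nat.cast_nonneg _) (hg u)) hrow_le
  have hQ : Summable Q := (summable_prod_of_nonneg hQ_nonneg).2
    ⟨fun u => (hrow u).summable, by simpa only [fun u => (hrow u).tsum_eq] using hdeg_summable⟩
  have hswap : (fun p : V × V => if G.Adj p.1 p.2 then g p.2 else 0) = Q ∘ Equiv.prodComm V V :=
    rfl
  rw [hswap, (Equiv.prodComm V V).summable_iff, comp_def, Equiv.tsum_eq]
  refine ⟨hQ, ?_⟩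
  calc ∑' p, Q p = ∑' u, G.degree u * g u := by
        rw [hQ.tsum_prod]; exact tsum_congr fun u => (hrow u).tsum_eq
    _ ≤ ∑' u, d * g u := hdeg_summable.tsum_le_tsum hrow_le (hgs.mul_left (d : ℝ))
    _ = d * ∑' u, g u := tsum_mul_left

end DecidableAdj

theorem summable_sum_neighborFinset (hdeg : ∀ u, G.degree u ≤ d) {g : V → ℝ} (hg : 0 ≤ g)
    (hgs : Summable g) : Summable fun w => ∑ u ∈ G.neighborFinset w, g u := by
  classical
  simpa only [fun w => (G.hasSum_ite_adj g w).tsum_eq] using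
    (summable_ite_adj_prod hdeg hg hgs).1.prod

theorem tsum_sum_neighborFinset_le (hdeg : ∀ u, G.degree u ≤ d) {g : V → ℝ} (hg : 0 ≤ g)
    (hgs : Summable g) : ∑' w, ∑ u ∈ G.neighborFinset w, g u ≤ d * ∑' u, g u := by
  classical
  obtain ⟨hP, hP_le⟩ := summable_ite_adj_prod hdeg hg hgs
  rw [hP.tsum_prod] at hP_le
  simpa only [fun w => (G.hasSum_ite_adj g w).tsum_eq] using hP_le

variable {𝕜 : Type*} [RCLike 𝕜]

theorem norm_adjOp_sq_le (hdeg : ∀ u, G.degree u ≤ d) (f : V → 𝕜) (w : V) :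
    ‖adjOp G f w‖ ^ 2 ≤ d * ∑ u ∈ G.neighborFinset w, ‖f u‖ ^ 2 :=
  calc ‖adjOp G f w‖ ^ 2 ≤ (∑ u ∈ G.neighborFinset w, ‖f u‖) ^ 2 :=
        pow_le_pow_left₀ (norm_nonneg _) (norm_sum_le _ _) 2
    _ ≤ G.degree w * ∑ u ∈ G.neighborFinset w, ‖f u‖ ^ 2 := by
        rw [← card_neighborFinset_eq_degree]; exact sq_sum_le_card_mul_sum_sq
    _ ≤ d * ∑ u ∈ G.neighborFinset w, ‖f u‖ ^ 2 := by gcongr; exact hdeg w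

theorem summable_norm_adjOp_sq (hdeg : ∀ u, G.degree u ≤ d) {f : V → 𝕜}
    (hf : Summable fun w => ‖f w‖ ^ 2) : Summable fun w => ‖adjOp G f w‖ ^ 2 :=
  ((summable_sum_neighborFinset hdeg (fun _ => sq_nonneg _) hf).mul_left (d : ℝ)).of_nonneg_of_le
    (fun _ => sq_nonneg _) (norm_adjOp_sq_le hdeg f)

theorem tsum_norm_adjOp_sq_le (hdeg : ∀ u, G.degree u ≤ d) {f : V → 𝕜}
    (hf : Summable fun w => ‖f w‖ ^ 2) :
    ∑' w, ‖adjOp G f w‖ ^ 2 ≤ d ^ 2 * ∑' w, ‖f w‖ ^ 2 :=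
  calc ∑' w, ‖adjOp G f w‖ ^ 2 ≤ ∑' w, d * ∑ u ∈ G.neighborFinset w, ‖f u‖ ^ 2 :=
        (summable_norm_adjOp_sq hdeg hf).tsum_le_tsum (norm_adjOp_sq_le hdeg f)
          ((summable_sum_neighborFinset hdeg (fun _ => sq_nonneg _) hf).mul_left _)
    _ = d * ∑' w, ∑ u ∈ G.neighborFinset w, ‖f u‖ ^ 2 := tsum_mul_left
    _ ≤ d * (d * ∑' w, ‖f w‖ ^ 2) := by
        gcongr; exact tsum_sum_neighborFinset_le hdeg (fun _ => sq_nonneg _) hf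
    _ = d ^ 2 * ∑' w, ‖f w‖ ^ 2 := by ring

theorem memℓp_adjOp (hdeg : ∀ u, G.degree u ≤ d) (f : ℓ²(V, 𝕜)) : Memℓp (adjOp G ⇑f) 2 :=
  (memℓp_two_iff_summable_sq _).2 <|
    summable_norm_adjOp_sq hdeg ((memℓp_two_iff_summable_sq _).1 f.2)

def adjLinearMap (hdeg : ∀ u, G.degree u ≤ d) : ℓ²(V, 𝕜) →ₗ[𝕜] ℓ²(V, 𝕜) where
  toFun f := ⟨adjOp G f, memℓp_adjOp hdeg f⟩
  map_add' _ _ := lp.ext <| funext fun _ => Finset.sum_add_distrib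
  map_smul' c _ := lp.ext <| funext fun _ => (Finset.mul_sum _ _ c).symm

theorem norm_adjLinearMap_apply_le (hdeg : ∀ u, G.degree u ≤ d) (f : ℓ²(V, 𝕜)) :
    ‖adjLinearMap hdeg f‖ ≤ d * ‖f‖ := by
  refine (pow_le_pow_iff_left₀ (norm_nonneg _) (by positivity) two_ne_zero).1 ?_
  rw [mul_pow, lp.norm_sq_eq_tsum_norm_sq, lp.norm_sq_eq_tsum_norm_sq]
  exact tsum_norm_adjOp_sq_le hdeg ((memℓp_two_iff_summable_sq _).1 f.2)

noncomputable def adjCLM (hdeg : ∀ u, G.degree u ≤ d) : ℓ²(V, 𝕜) →L[𝕜] ℓ²(V, 𝕜) :=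
  (adjLinearMap hdeg).mkContinuous d (norm_adjLinearMap_apply_le hdeg)

theorem coe_adjCLM_apply (hdeg : ∀ u, G.degree u ≤ d) (f : ℓ²(V, 𝕜)) :
    ⇑(adjCLM hdeg f) = adjOp G ⇑f :=
  rfl

theorem norm_adjCLM_le (hdeg : ∀ u, G.degree u ≤ d) : ‖adjCLM (𝕜 := 𝕜) hdeg‖ ≤ d :=
  LinearMap.mkContinuous_norm_le _ (Nat.cast_nonneg d) _

theorem summable_ite_adj_conj_mul (hdeg : ∀ u, G.degree u ≤ d) [DecidableRel G.Adj]
    (f g : ℓ²(V, 𝕜)) :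
    Summable fun p : V × V => if G.Adj p.1 p.2 then conj (f p.2) * g p.1 else 0 := by
  have hf := (summable_ite_adj_prod hdeg (fun _ => sq_nonneg _)
    ((memℓp_two_iff_summable_sq _).1 f.2)).1
  have hg := (Equiv.prodComm V V).summable_iff.2 (summable_ite_adj_prod hdeg
    (fun _ => sq_nonneg _) ((memℓp_two_iff_summable_sq _).1 g.2)).1
  refine Summable.of_norm_bounded (hf.add hg) fun p => ?_
  by_cases h : G.Adj p.1 p.2
  · simp only [h, h.symm, if_true, comp_apply, Equiv.prodComm_apply, Prod.fst_swap,
      Prod.snd_swap, norm_mul, RCLike.norm_conj]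
    nlinarith [two_mul_le_add_sq ‖f p.2‖ ‖g p.1‖, norm_nonneg (f p.2), norm_nonneg (g p.1)]
  · simp [h, G.adj_comm p.2]

theorem isSelfAdjoint_adjCLM (hdeg : ∀ u, G.degree u ≤ d) :
    IsSelfAdjoint (adjCLM (𝕜 := 𝕜) hdeg) := by
  classical
  refine ContinuousLinearMap.isSelfAdjoint_iff_isSymmetric.2 fun f g => ?_
  set P : V → V → 𝕜 := fun w u => if G.Adj w u then conj (f u) * g w else 0
  have hrow (w : V) : ∑' u, P w u = conj (adjOp G f w) * g w := by
    rw [(G.hasSum_ite_adj _ w).tsum_eq, adjOp, map_sum, Finset.sum_mul]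
  have hcol (u : V) : ∑' w, P w u = conj (f u) * adjOp G g u := by
    simp only [P, G.adj_comm _ u]
    rw [(G.hasSum_ite_adj _ u).tsum_eq, adjOp, Finset.mul_sum]
  calc ⟪adjCLM hdeg f, g⟫_𝕜 = ∑' w, ∑' u, P w u := by
        simp only [lp.inner_eq_tsum, RCLike.inner_apply', coe_adjCLM_apply, hrow]
    _ = ∑' u, ∑' w, P w u := (Summable.tsum_comm (summable_ite_adj_conj_mul hdeg f g)).symm
    _ = ⟪f, adjCLM hdeg g⟫_𝕜 := by
        simp only [lp.inner_eq_tsum, RCLike.inner_apply', coe_adjCLM_apply, hcol]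

theorem bijective_adjCLM_sub_algebraMap (hdeg : ∀ u, G.degree u ≤ d) {l : ℂ}
    (hl : ¬ (l.im = 0 ∧ -(d : ℝ) ≤ l.re ∧ l.re ≤ d)) :
    Bijective (adjCLM (𝕜 := ℂ) hdeg - algebraMap ℂ (ℓ²(V, ℂ) →L[ℂ] ℓ²(V, ℂ)) l) := by
  have hunit := spectrum.notMem_iff.1 <|
    (isSelfAdjoint_adjCLM (𝕜 := ℂ) hdeg).notMem_spectrum_of_norm_le (norm_adjCLM_le hdeg) hl
  rw [← neg_sub]
  exact ContinuousLinearMap.isUnit_iff_bijective.1 hunit.neg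

theorem isPropagator_iff_adjCLM_sub_algebraMap [DecidableEq V] (hdeg : ∀ u, G.degree u ≤ d)
    (l : ℂ) (v : V) (f : ℓ²(V, ℂ)) :
    IsPropagator G l v f ↔
      (adjCLM (𝕜 := ℂ) hdeg - algebraMap ℂ (ℓ²(V, ℂ) →L[ℂ] ℓ²(V, ℂ)) l) f = lp.single 2 v 1 := by
  rw [IsPropagator, lp.ext_iff, funext_iff]
  refine forall_congr' fun w => ?_
  simp only [Algebra.algebraMap_eq_smul_one, sub_apply, smul_apply,
    one_apply_eq_self, lp.coeFn_sub, lp.coeFn_smul,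
    coe_adjCLM_apply, Pi.sub_apply, Pi.smul_apply, smul_eq_mul, lp.single_apply, Pi.single_apply]

end SimpleGraph

open SimpleGraph in
theorem stmt13_general {V : Type*} [DecidableEq V] (G : SimpleGraph V) [G.LocallyFinite]
    (d : ℕ) (hdeg : ∀ u : V, G.degree u ≤ d)
    (v : V) (l : ℂ) (hl : ¬ (l.im = 0 ∧ -(d : ℝ) ≤ l.re ∧ l.re ≤ (d : ℝ))) :
    ∃! f : V → ℂ, (Summable fun w : V => ‖f w‖ ^ 2) ∧ IsPropagator G l v f := by
  obtain ⟨x, hx, hx_unique⟩ :=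
    (bijective_adjCLM_sub_algebraMap hdeg hl).existsUnique (lp.single 2 v 1)
  refine ⟨x, ⟨(memℓp_two_iff_summable_sq _).1 x.2,
    (isPropagator_iff_adjCLM_sub_algebraMap hdeg l v x).2 hx⟩, ?_⟩
  rintro f ⟨hf, hprop⟩
  have hf_eq := hx_unique ⟨f, (memℓp_two_iff_summable_sq f).2 hf⟩
    ((isPropagator_iff_adjCLM_sub_algebraMap hdeg l v _).1 hprop)
  exact congrArg (⇑) hf_eq

theorem stmt13 {V : Type*} [DecidableEq V] (G : SimpleGraph V) [G.LocallyFinite]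
    (hconn : G.Connected) (d : ℕ) (hdeg : ∀ u : V, G.degree u ≤ d)
    (v : V) (l : ℂ) (hl : ¬ (l.im = 0 ∧ -(d : ℝ) ≤ l.re ∧ l.re ≤ (d : ℝ))) :
    ∃! f : V → ℂ, (Summable fun w : V => ‖f w‖ ^ 2) ∧ IsPropagator G l v f :=
  stmt13_general G d hdeg v l hl
end

section
/- Let F be a field of characteristic 0 and let Δ be a finite connected simple graph with more than one vertex. Let A be the adjacency matrix of Δ over the polynomial ring F[x] and let M = x·I − A be its characteristic matrix. Then every minor of M of order |V(Δ)| − 1 is a nonzero polynomial; equivalently, every entry of the adjugate matrix of M is a nonzero element of F[x]. Consequently, the inverse of M over the field of rational functions F(x) has all entries nonzero. -/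
/-!
Write `p = Σ cₖ Xᵏ` for the characteristic polynomial of `M`. The matrices `X • 1` and `M` commute,
so `p(X) • 1 - p(M) = Q * (X • 1 - M)` with `Q = Σₖ cₖ Σ_{i<k} Xⁱ Mᵏ⁻¹⁻ⁱ`; as `p(M) = 0` and the
characteristic matrix is regular, `Q` is its adjugate. The coefficient of `X^(n-1-d)` in `Q u v` is
`Σ_{k > n-1-d} cₖ (M^(k-n+d)) u v`. For the adjacency matrix and `d = dist u v` every term with
`k < n` vanishes, since there are no walks shorter than `d`, and the term `k = n` counts the
walks of length `d` from `u` to `v`, of which there is at least one.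
-/

open Polynomial Finset

theorem Commute.aeval_sub_aeval_eq_mul {R A : Type*} [CommSemiring R] [Ring A] [Algebra R A]
    {s t : A} (h : Commute s t) (p : R[X]) :
    aeval s p - aeval t p =
      (∑ k ∈ range (p.natDegree + 1), p.coeff k • ∑ i ∈ range k, s ^ i * t ^ (k - 1 - i)) *
        (s - t) := by
  simp only [aeval_eq_sum_range, ← sum_sub_distrib, ← smul_sub, sum_mul, smul_mul_assoc,
    h.geom_sum₂_mul]

namespace Matrix

variable {n R : Type*} [Fintype n] [DecidableEq n] [CommRing R]

theorem adjugate_charmatrix (M : Matrix n n R) :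
    (charmatrix M).adjugate = ∑ k ∈ range (M.charpoly.natDegree + 1), M.charpoly.coeff k •
      ∑ i ∈ range k, (X : R[X]) ^ i • (M ^ (k - 1 - i)).map C := by
  set s : Matrix n n R[X] := algebraMap R[X] _ X
  set t : Matrix n n R[X] := (Algebra.ofId R R[X]).mapMatrix M
  have hst : charmatrix M = s - t := rfl
  have hs : aeval s M.charpoly = M.charpoly • 1 := by
    rw [aeval_algebraMap_apply, aeval_X_left_apply, Algebra.algebraMap_eq_smul_one]
  have ht : aeval t M.charpoly = 0 := by
    rw [aeval_algHom_apply, aeval_self_charpoly, map_zero]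
  have hpow (i j : ℕ) : s ^ i * t ^ j = (X : R[X]) ^ i • (M ^ j).map C := by
    rw [← map_pow, ← map_pow, ← Algebra.smul_def, AlgHom.mapMatrix_apply]
    rfl
  refine (isRegular_of_isLeftRegular_det M.charpoly_monic.isRegular.left).right ?_
  simp only [← hpow]
  change _ * charmatrix M = _ * charmatrix M
  rw [adjugate_mul, hst, ← (Algebra.commute_algebraMap_left X t).aeval_sub_aeval_eq_mul, hs, ht,
    sub_zero]
  rfl

theorem coeff_adjugate_charmatrix_apply (M : Matrix n n R) (m : ℕ) (a b : n) :
    ((charmatrix M).adjugate a b).coeff m =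
      ∑ k ∈ range (M.charpoly.natDegree + 1) with m < k,
        M.charpoly.coeff k * (M ^ (k - 1 - m)) a b := by
  simp only [adjugate_charmatrix, sum_apply, smul_apply, map_apply, smul_eq_mul, finsetSum_coeff,
    coeff_smul, mul_comm ((X : R[X]) ^ _), coeff_C_mul_X_pow, sum_ite_eq, mem_range, mul_ite,
    mul_zero, sum_filter]

theorem coeff_adjugate_charmatrix_apply_of_pow_apply_eq_zero [Nontrivial R] (M : Matrix n n R)
    {d : ℕ} (hd : d < Fintype.card n) {a b : n} (h : ∀ l < d, (M ^ l) a b = 0) :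
    ((charmatrix M).adjugate a b).coeff (Fintype.card n - 1 - d) = (M ^ d) a b := by
  rw [coeff_adjugate_charmatrix_apply, charpoly_natDegree_eq_dim, sum_eq_single (Fintype.card n)]
  · rw [← M.charpoly_natDegree_eq_dim, M.charpoly_monic.coeff_natDegree, one_mul,
      M.charpoly_natDegree_eq_dim, show Fintype.card n - 1 - (Fintype.card n - 1 - d) = d by omega]
  · intro k hk hkn
    rw [mem_filter, mem_range] at hk
    rw [h _ (by omega), mul_zero]
  · exact fun hn => absurd (mem_filter.2 ⟨self_mem_range_succ _, by omega⟩) hn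

theorem inv_map_apply_ne_zero {K : Type*} [Field K] {f : R →+* K} (hf : Function.Injective f)
    {M : Matrix n n R} (hdet : M.det ≠ 0) {i j : n} (h : M.adjugate i j ≠ 0) :
    (M.map f)⁻¹ i j ≠ 0 := by
  rw [inv_def, ← RingHom.mapMatrix_apply, ← RingHom.map_adjugate, ← RingHom.map_det, smul_apply,
    RingHom.mapMatrix_apply, map_apply, smul_eq_mul, Ring.inverse_eq_inv]
  exact mul_ne_zero (inv_ne_zero ((map_ne_zero_iff f hf).2 hdet)) ((map_ne_zero_iff f hf).2 h)

end Matrix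

namespace SimpleGraph

variable {V : Type*} [Fintype V] {G : SimpleGraph V}

theorem Connected.dist_lt_card (h : G.Connected) (u v : V) : G.dist u v < Fintype.card V := by
  obtain ⟨p, hp, hl⟩ := h.exists_path_of_dist u v
  exact hl ▸ hp.length_lt

variable [DecidableEq V] [DecidableRel G.Adj] {R : Type*} [Semiring R]

theorem adjMatrix_pow_apply_eq_zero_of_lt_dist {l : ℕ} {u v : V} (h : l < G.dist u v) :
    (G.adjMatrix R ^ l) u v = 0 := by
  rw [adjMatrix_pow_apply_eq_card_walk, Fintype.card_eq_zero_iff.2 ⟨fun p => ?_⟩, Nat.cast_zero]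
  have hp : p.1.length = l := p.2
  exact (G.dist_le p.1).not_gt (by rwa [hp])

theorem Reachable.adjMatrix_pow_dist_apply_ne_zero [CharZero R] {u v : V} (h : G.Reachable u v) :
    (G.adjMatrix R ^ G.dist u v) u v ≠ 0 := by
  rw [adjMatrix_pow_apply_eq_card_walk, Nat.cast_ne_zero, ← Nat.pos_iff_ne_zero,
    Fintype.card_pos_iff]
  obtain ⟨p, hp⟩ := h.exists_walk_length_eq_dist
  exact ⟨⟨p, hp⟩⟩

end SimpleGraph

theorem stmt14_general {V F : Type*} [Fintype V] [DecidableEq V] [Field F] [CharZero F]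
    (D : SimpleGraph V) [DecidableRel D.Adj] (hconn : D.Connected) :
    (∀ i j : V, (Matrix.charmatrix (D.adjMatrix F)).adjugate i j ≠ 0) ∧
    (∀ i j : V, ((Matrix.charmatrix (D.adjMatrix F)).map
        (algebraMap (Polynomial F) (RatFunc F)))⁻¹ i j ≠ 0) := by
  have hadj (i j : V) : (Matrix.charmatrix (D.adjMatrix F)).adjugate i j ≠ 0 := by
    intro h
    have hcoeff := (D.adjMatrix F).coeff_adjugate_charmatrix_apply_of_pow_apply_eq_zero
      (hconn.dist_lt_card i j) fun _ hl => SimpleGraph.adjMatrix_pow_apply_eq_zero_of_lt_dist hl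
    rw [h, coeff_zero] at hcoeff
    exact (hconn.preconnected i j).adjMatrix_pow_dist_apply_ne_zero hcoeff.symm
  exact ⟨hadj, fun i j => Matrix.inv_map_apply_ne_zero (RatFunc.algebraMap_injective F)
    (D.adjMatrix F).charpoly_monic.ne_zero (hadj i j)⟩

theorem stmt14 {V F : Type*} [Fintype V] [DecidableEq V] [Field F] [CharZero F]
    (D : SimpleGraph V) [DecidableRel D.Adj] (hconn : D.Connected)
    (hcard : 1 < Fintype.card V) :
    (∀ i j : V, (Matrix.charmatrix (D.adjMatrix F)).adjugate i j ≠ 0) ∧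
    (∀ i j : V, ((Matrix.charmatrix (D.adjMatrix F)).map
        (algebraMap (Polynomial F) (RatFunc F)))⁻¹ i j ≠ 0) :=
  stmt14_general D hconn
end

section
/- Let Γ be a locally finite simple graph, F a field, λ ∈ F and v a vertex of Γ. If X₀ is the support of some eigenfunction of A_{Γ,F} corresponding to λ with v ∈ X₀, then there exists a set X ⊆ X₀ with v ∈ X such that X is the support of some eigenfunction of A_{Γ,F} corresponding to λ and X is minimal with this property: no proper subset of X containing v is the support of an eigenfunction of A_{Γ,F} corresponding to λ. -/
/-!
Zorn's lemma applied to supports of `λ`-eigenfunctions containing `v`, ordered by reverse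
inclusion. For a chain `c`, a normalized eigenfunction (`g v = 1`) vanishing off `⋂₀ c` is a
solution of a system of linear equations, each involving finitely many values of `g`, and every
finite subsystem is solved by a normalized eigenfunction supported in a small enough member of
`c`. Such systems over a field are solvable as soon as they are finitely solvable, because
`F^V` is the full dual of `V →₀ F`.
-/

open Function

theorem exists_linearCombination_eq_of_forall_finset {ι V F : Type*} [Field F]
    (a : ι → V →₀ F) (b : ι → F)
    (h : ∀ s : Finset ι, ∃ g : V → F, ∀ i ∈ s, Finsupp.linearCombination F g (a i) = b i) :
    ∃ g : V → F, ∀ i, Finsupp.linearCombination F g (a i) = b i := by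
  set u := Finsupp.linearCombination F a
  set β := Finsupp.linearCombination F b
  have hker : LinearMap.ker u ≤ LinearMap.ker β := by
    intro x hx
    obtain ⟨g, hg⟩ := h x.support
    have : Finsupp.linearCombination F g (u x) = β x := by
      rw [Finsupp.apply_linearCombination, Finsupp.linearCombination_apply,
        Finsupp.linearCombination_apply]
      exact Finsupp.sum_congr fun i hi => by rw [comp_apply, hg i hi]
    rw [LinearMap.mem_ker.1 hx, map_zero] at this
    exact this.symm
  -- `β` factors through `u`; any linear `φ` on `V →₀ F` is `linearCombination` of `φ ∘ single`.
  obtain ⟨r, hr⟩ := ((LinearMap.ker u).liftQ u le_rfl).exists_leftInverse_of_injective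
    (Submodule.ker_liftQ_eq_bot _ _ _ le_rfl)
  set φ := (LinearMap.ker u).liftQ β hker ∘ₗ r
  have hφ : ∀ x, φ (u x) = β x := fun x => by
    have hx : r (u x) = Submodule.Quotient.mk x := LinearMap.congr_fun hr (Submodule.Quotient.mk x)
    simp only [φ, LinearMap.comp_apply, hx, Submodule.liftQ_apply]
  refine ⟨fun w => φ (Finsupp.single w 1), fun i => ?_⟩
  have : Finsupp.linearCombination F (fun w => φ (Finsupp.single w 1)) = φ := by
    ext; simp
  simpa [this, u, β] using hφ (Finsupp.single i 1)

noncomputable def eigenFunctional {V F : Type*} (G : SimpleGraph V) [G.LocallyFinite] [Field F]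
    (l : F) (w : V) : V →₀ F :=
  ∑ u ∈ G.neighborFinset w, Finsupp.single u 1 - l • Finsupp.single w 1

section Eigenfun

variable {V F : Type*} {G : SimpleGraph V} [G.LocallyFinite] [Field F] {l : F}

theorem linearCombination_eigenFunctional (g : V → F) (w : V) :
    Finsupp.linearCombination F g (eigenFunctional G l w) = adjOp G g w - l * g w := by
  simp [eigenFunctional, adjOp]

theorem IsEigenfun.smul {g : V → F} (hg : IsEigenfun G l g) {a : F} (ha : a ≠ 0) :
    IsEigenfun G l (a • g) :=
  ⟨smul_ne_zero ha hg.1, fun w => by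
    simp only [adjOp, Pi.smul_apply, smul_eq_mul, ← Finset.mul_sum]
    rw [← adjOp, hg.2 w, mul_left_comm]⟩

theorem IsEigenfun.exists_normalize {g : V → F} (hg : IsEigenfun G l g) {v : V}
    (hv : v ∈ support g) : ∃ g' : V → F, IsEigenfun G l g' ∧ g' v = 1 ∧ support g' = support g :=
  ⟨(g v)⁻¹ • g, hg.smul (inv_ne_zero hv), inv_mul_cancel₀ hv,
    support_const_smul_of_ne_zero _ _ (inv_ne_zero hv)⟩

theorem exists_isEigenfun_support_subset_sInter {v : V} {c : Set (Set V)}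
    (hc : IsChain (· ⊆ ·) c) (hne : c.Nonempty)
    (hcv : ∀ X ∈ c, ∃ g : V → F, IsEigenfun G l g ∧ v ∈ support g ∧ support g ⊆ X) :
    ∃ g : V → F, IsEigenfun G l g ∧ v ∈ support g ∧ support g ⊆ ⋂₀ c := by
  classical
  replace hcv : ∀ X ∈ c, ∃ g : V → F, IsEigenfun G l g ∧ g v = 1 ∧ support g ⊆ X := by
    intro X hX
    obtain ⟨g, hg, hgv, hgX⟩ := hcv X hX
    obtain ⟨g', hg', hg'v, hsupp⟩ := hg.exists_normalize hgv
    exact ⟨g', hg', hg'v, hsupp.trans_subset hgX⟩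
  -- `none`: `g v = 1`; `inl w`: the eigenvalue equation at `w`; `inr u`: `g u = 0`.
  let a : Option (V ⊕ ↥(⋂₀ c)ᶜ) → V →₀ F := fun i =>
    i.elim (Finsupp.single v 1) (Sum.elim (eigenFunctional G l) fun u => Finsupp.single u 1)
  let b : Option (V ⊕ ↥(⋂₀ c)ᶜ) → F := fun i => i.elim 1 0
  have hlocal : ∀ i, ∃ X ∈ c, ∀ g : V → F, IsEigenfun G l g → g v = 1 → support g ⊆ X →
      Finsupp.linearCombination F g (a i) = b i := by
    obtain ⟨X₀, hX₀⟩ := hne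
    rintro (_ | w | ⟨u, hu⟩)
    · exact ⟨X₀, hX₀, fun g _ hgv _ => by simpa [a, b] using hgv⟩
    · exact ⟨X₀, hX₀, fun g hg _ _ => by simp [a, b, linearCombination_eigenFunctional, hg.2 w]⟩
    · obtain ⟨X, hX, huX⟩ : ∃ X ∈ c, u ∉ X := by simpa using hu
      exact ⟨X, hX, fun g _ _ hgX => by simpa [a, b] using notMem_support.1 (mt (@hgX u) huX)⟩
  choose X hXc hX using hlocal
  have hdir : Directed (· ⊇ ·) (fun Y : c => (Y : Set V)) :=
    IsChain.directed (f := id) hc.symm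
  obtain ⟨g, hg⟩ := exists_linearCombination_eq_of_forall_finset a b fun s => by
    have : Nonempty c := hne.to_subtype
    obtain ⟨Z, hZ⟩ := hdir.finset_le (s.image fun i => ⟨X i, hXc i⟩)
    obtain ⟨g, hg, hgv, hgZ⟩ := hcv Z Z.2
    exact ⟨g, fun i hi => hX i g hg hgv (hgZ.trans (hZ _ (Finset.mem_image_of_mem _ hi)))⟩
  have hgv : g v = 1 := by simpa [a, b] using hg none
  refine ⟨g, ⟨fun h0 => by simp [h0] at hgv, fun w => ?_⟩, by simp [hgv], fun u hu => ?_⟩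
  · simpa [a, b, linearCombination_eigenFunctional, sub_eq_zero] using hg (some (.inl w))
  · by_contra hu'
    exact hu (by simpa [a, b] using hg (some (.inr ⟨u, hu'⟩)))

end Eigenfun

theorem stmt16 {V F : Type*} (G : SimpleGraph V) [G.LocallyFinite] [Field F]
    (l : F) (v : V) (f₀ : V → F) (hf₀ : IsEigenfun G l f₀) (hv : v ∈ support f₀) :
    ∃ X : Set V, X ⊆ support f₀ ∧ v ∈ X ∧
      (∃ g : V → F, IsEigenfun G l g ∧ support g = X) ∧
      ∀ Y : Set V, Y ⊆ X → Y ≠ X → v ∈ Y →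
        ¬ ∃ g : V → F, IsEigenfun G l g ∧ support g = Y := by
  set S : Set (Set V) :=
    {X | X ⊆ support f₀ ∧ v ∈ X ∧ ∃ g : V → F, IsEigenfun G l g ∧ support g = X}
  have hS : ∀ c ⊆ S, IsChain (· ⊆ ·) c → c.Nonempty → ∃ lb ∈ S, ∀ X ∈ c, lb ⊆ X := by
    intro c hcS hc hne
    obtain ⟨g, hg, hgv, hgc⟩ := exists_isEigenfun_support_subset_sInter hc hne fun X hX => by
      obtain ⟨-, hvX, g, hg, rfl⟩ := hcS hX
      exact ⟨g, hg, hvX, subset_rfl⟩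
    obtain ⟨X, hX⟩ := hne
    refine ⟨support g, ⟨?_, hgv, g, hg, rfl⟩, fun Y hY => hgc.trans (Set.sInter_subset_of_mem hY)⟩
    exact hgc.trans ((Set.sInter_subset_of_mem hX).trans (hcS hX).1)
  obtain ⟨X, -, hmin⟩ := zorn_superset_nonempty S hS _ ⟨subset_rfl, hv, f₀, hf₀, rfl⟩
  obtain ⟨hXf₀, hvX, hXeig⟩ := hmin.prop
  exact ⟨X, hXf₀, hvX, hXeig, fun Y hYX hYX' hvY hYeig =>
    hYX' (hmin.eq_of_le ⟨hYX.trans hXf₀, hvY, hYeig⟩ hYX)⟩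
end

section
/- Let Γ be a locally finite simple graph, F a field, λ ∈ F and v a vertex of Γ. Suppose X ⊆ V(Γ) contains v, X is the support of some eigenfunction of A_{Γ,F} corresponding to λ, and X is minimal by inclusion among supports (containing v) of eigenfunctions of A_{Γ,F} corresponding to λ. Then X is Γ²-connected. -/
/-!
Let `f` be an eigenfunction with support `X` and let `Y` be the `Γ²`-component of `v` in `X`.
The neighbours of any vertex `w` that lie in `X` are pairwise `Γ²`-adjacent through `w`, so they
lie either all in `Y` or all outside `Y`. Hence cutting `f` down to `Y` does not change the
eigenvalue equation at any vertex, and minimality of `X` forces `Y = X`.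
-/

open Function

/-- The graph `Γ²` on the same vertex set as `G`, in which two distinct vertices are
adjacent exactly when they are joined in `G` by a walk of length at most `2`. -/
def squareGraph {V : Type*} (G : SimpleGraph V) : SimpleGraph V where
  Adj u w := u ≠ w ∧ (G.Adj u w ∨ ∃ z, G.Adj u z ∧ G.Adj z w)
  symm := ⟨by
    rintro u w ⟨h, h'⟩
    refine ⟨h.symm, ?_⟩
    rcases h' with h' | ⟨z, h1, h2⟩
    · exact Or.inl h'.symm
    · exact Or.inr ⟨z, h2.symm, h1.symm⟩⟩
  loopless := ⟨fun u h => h.1 rfl⟩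

namespace SimpleGraph

theorem induce_connected_of_forall_closed {V : Type*} (H : SimpleGraph V) {X : Set V} {v : V}
    (hvX : v ∈ X)
    (hX : ∀ Y ⊆ X, v ∈ Y → (∀ a ∈ Y, ∀ b ∈ X, H.Adj a b → b ∈ Y) → Y = X) :
    (H.induce X).Connected := by
  set Y : Set V := {w | ∃ h : w ∈ X, (H.induce X).Reachable ⟨v, hvX⟩ ⟨w, h⟩}
  have hYX : Y = X := by
    refine hX Y (fun w hw => hw.1) ⟨hvX, Reachable.refl _⟩ ?_
    rintro a ⟨haX, hva⟩ b hbX hab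
    exact ⟨hbX, hva.trans (Adj.reachable (show (H.induce X).Adj ⟨a, haX⟩ ⟨b, hbX⟩ from hab))⟩
  have : Nonempty X := ⟨⟨v, hvX⟩⟩
  refine ⟨fun ⟨a, ha⟩ ⟨b, hb⟩ => ?_⟩
  obtain ⟨_, hva⟩ : a ∈ Y := hYX ▸ ha
  obtain ⟨_, hvb⟩ : b ∈ Y := hYX ▸ hb
  exact hva.symm.trans hvb

end SimpleGraph

section AdjOp

variable {V F : Type*} {G : SimpleGraph V} [G.LocallyFinite] [Field F]

theorem adjOp_indicator_of_forall_mem {f : V → F} {Y : Set V} {w : V}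
    (h : ∀ u, G.Adj w u → f u ≠ 0 → u ∈ Y) :
    adjOp G (Y.indicator f) w = adjOp G f w := by
  refine Finset.sum_congr rfl fun u hu => ?_
  by_cases hfu : f u = 0
  · simp [hfu]
  · exact Set.indicator_of_mem (h u ((G.mem_neighborFinset w u).1 hu) hfu) f

theorem adjOp_indicator_of_forall_notMem {f : V → F} {Y : Set V} {w : V}
    (h : ∀ u, G.Adj w u → u ∉ Y) :
    adjOp G (Y.indicator f) w = 0 :=
  Finset.sum_eq_zero fun u hu => Set.indicator_of_notMem (h u ((G.mem_neighborFinset w u).1 hu)) f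

theorem adjOp_indicator_eq_mul {l : F} {f : V → F} {Y : Set V}
    (hf : ∀ w, adjOp G f w = l * f w)
    (hY : ∀ a ∈ Y, ∀ b ∈ support f, (squareGraph G).Adj a b → b ∈ Y) (w : V) :
    adjOp G (Y.indicator f) w = l * Y.indicator f w := by
  by_cases hwY : w ∈ Y
  · have hall : ∀ u, G.Adj w u → f u ≠ 0 → u ∈ Y :=
      fun u hwu hfu => hY w hwY u hfu ⟨hwu.ne, Or.inl hwu⟩
    rw [adjOp_indicator_of_forall_mem hall, hf, Set.indicator_of_mem hwY]
  rw [Set.indicator_of_notMem hwY, mul_zero]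
  by_cases hex : ∃ u, G.Adj w u ∧ u ∈ Y
  · obtain ⟨u, hwu, huY⟩ := hex
    have hall : ∀ u', G.Adj w u' → f u' ≠ 0 → u' ∈ Y := by
      intro u' hwu' hfu'
      by_cases hu' : u = u'
      · exact hu' ▸ huY
      · exact hY u huY u' hfu' ⟨hu', Or.inr ⟨w, hwu.symm, hwu'⟩⟩
    have hfw : f w = 0 := by
      by_contra hfw
      exact hwY (hY u huY w hfw ⟨hwu.ne.symm, Or.inl hwu.symm⟩)
    rw [adjOp_indicator_of_forall_mem hall, hf, hfw, mul_zero]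
  · push Not at hex
    exact adjOp_indicator_of_forall_notMem hex

end AdjOp

theorem stmt17 {V F : Type*} (G : SimpleGraph V) [G.LocallyFinite] [Field F]
    (l : F) (v : V) (X : Set V) (hvX : v ∈ X)
    (hsupp : ∃ f : V → F, IsEigenfun G l f ∧ support f = X)
    (hmin : ∀ g : V → F, IsEigenfun G l g → v ∈ support g → support g ⊆ X →
      support g = X) :
    ((squareGraph G).induce X).Connected := by
  obtain ⟨f, ⟨-, hf⟩, rfl⟩ := hsupp
  refine (squareGraph G).induce_connected_of_forall_closed hvX fun Y hYf hvY hY => ?_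
  have hsupp : support (Y.indicator f) = Y := by
    rw [Set.support_indicator, Set.inter_eq_left.2 hYf]
  have hv : v ∈ support (Y.indicator f) := by rwa [hsupp]
  have heig : IsEigenfun G l (Y.indicator f) :=
    ⟨support_nonempty_iff.1 ⟨v, hv⟩, adjOp_indicator_eq_mul hf hY⟩
  rw [← hsupp]
  exact hmin _ heig hv (hsupp.subset.trans hYf)
end

section
/- Let Γ be a locally finite simple graph, F a field and λ ∈ F. Suppose (X_i)_{i ∈ I} is a family of finite subsets of V(Γ) whose union is infinite such that for every i ∈ I there is an eigenfunction of A_{Γ,F} corresponding to λ whose support equals X_i. Then for every vertex v ∈ ⋃_{i ∈ I} X_i there exists an eigenfunction of A_{Γ,F} corresponding to λ whose support is infinite, contains v, and is contained in ⋃_{i ∈ I} X_i. -/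
/-!
The span `W` of the given eigenfunctions consists of finitely supported
eigenfunctions with support in `U = ⋃ i, X i`. Since `U` is infinite, `W` is infinite-dimensional,
so for every `g ∈ W` some nonzero `g' ∈ W` vanishes on the finite set `supp g`. Starting from an
eigenfunction that is nonzero at `v` and adding such increments forever gives a sequence that is
pointwise eventually constant and whose supports grow strictly. Its pointwise limit has infinite
support, and it is still an eigenfunction because the eigen-equation at `w` only involves the
finitely many values on the closed neighbourhood of `w`.
-/

open Function

open Filter Submodule Module.End

section Eigenspace

variable {V : Type*} (G : SimpleGraph V) [G.LocallyFinite]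

def adjEnd (F : Type*) [Field F] : Module.End F (V → F) where
  toFun := adjOp G
  map_add' _ _ := funext fun _ => Finset.sum_add_distrib
  map_smul' _ _ := funext fun _ => Finset.mul_sum .. |>.symm

variable {F : Type*} [Field F]

theorem isEigenfun_iff_hasEigenvector {l : F} {f : V → F} :
    IsEigenfun G l f ↔ (adjEnd G F).HasEigenvector l f := by
  rw [hasEigenvector_iff, mem_eigenspace_iff, and_comm, funext_iff]
  rfl

theorem mem_eigenspace_of_eventually_eq {l : F} {ι : Type*} {L : Filter ι} [L.NeBot]
    {h : ι → V → F} {f : V → F} (hh : ∀ n, h n ∈ (adjEnd G F).eigenspace l)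
    (hf : ∀ x, ∀ᶠ n in L, h n x = f x) : f ∈ (adjEnd G F).eigenspace l := by
  classical
  rw [mem_eigenspace_iff]
  funext w
  obtain ⟨n, hn⟩ : ∃ n, ∀ u ∈ insert w (G.neighborFinset w), h n u = f u :=
    ((Finset.eventually_all _).2 fun u _ => hf u).exists
  have hw := congrFun (mem_eigenspace_iff.1 (hh n)) w
  calc adjOp G f w = adjOp G (h n) w :=
        Finset.sum_congr rfl fun u hu => (hn u (Finset.mem_insert_of_mem hu)).symm
    _ = l * f w := by rw [← hn w (Finset.mem_insert_self _ _)]; exact hw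

end Eigenspace

section Support

variable {V R M : Type*} [Semiring R] [AddCommMonoid M] [Module R M]

def finitelySupportedIn (U : Set V) : Submodule R (V → M) where
  carrier := {g | (support g).Finite ∧ support g ⊆ U}
  add_mem' := fun ⟨hf, hU⟩ ⟨hf', hU'⟩ =>
    ⟨(hf.union hf').subset (support_add _ _), (support_add _ _).trans (Set.union_subset hU hU')⟩
  zero_mem' := by simp
  smul_mem' c _ := fun ⟨hf, hU⟩ =>
    ⟨hf.subset (support_const_smul_subset c _), (support_const_smul_subset c _).trans hU⟩

theorem exists_ne_zero_mem_span_eqOn_zero {K : Type*} [Field K] {s : Set (V → K)}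
    (hs : ∀ g ∈ s, (support g).Finite) (hinf : (⋃ g ∈ s, support g).Infinite)
    {T : Set V} (hT : T.Finite) : ∃ g ∈ span K s, g ≠ 0 ∧ ∀ x ∈ T, g x = 0 := by
  by_contra! H
  have : Finite T := hT.to_subtype
  let restrict : span K s →ₗ[K] T → K := LinearMap.funLeft K K (↑) ∘ₗ (span K s).subtype
  have hinj : Injective restrict := by
    refine (injective_iff_map_eq_zero restrict).2 fun g hg => ?_
    by_contra hne
    obtain ⟨x, hxT, hx⟩ := H g g.2 (by simpa using hne)
    exact hx (congrFun hg ⟨x, hxT⟩)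
  have : FiniteDimensional K (span K s) := .of_injective restrict hinj
  obtain ⟨t, hts, hspan⟩ := (fg_span_iff_fg_span_finset_subset s).1 (Module.Finite.iff_fg.1 this)
  have hle : span K s ≤ finitelySupportedIn (⋃ g ∈ t, support g) := by
    rw [hspan, span_le]
    exact fun g hg => ⟨hs g (hts hg), Set.subset_biUnion_of_mem (u := fun g => support g) hg⟩
  refine hinf ((t.finite_toSet.biUnion fun g hg => hs g (hts hg)).subset ?_)
  exact Set.iUnion₂_subset fun g hg => (hle (subset_span hg)).2

end Support

section Increments

variable {V M : Type*} [AddZeroClass M] {h d : ℕ → V → M}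

theorem apply_eq_of_mem_support_of_le (hstep : ∀ n, h (n + 1) = h n + d n)
    (hvan : ∀ n, ∀ x ∈ support (h n), d n x = 0) {x : V} {n m : ℕ} (hx : x ∈ support (h n))
    (hnm : n ≤ m) : h m x = h n x := by
  induction m, hnm using Nat.le_induction with
  | base => rfl
  | succ m _ ih =>
    rw [hstep, Pi.add_apply, hvan m x (by rwa [mem_support, ih]), add_zero, ih]

theorem exists_limit_of_disjoint_increments (hstep : ∀ n, h (n + 1) = h n + d n)
    (hvan : ∀ n, ∀ x ∈ support (h n), d n x = 0) (hd : ∀ n, d n ≠ 0) :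
    ∃ f : V → M, (∀ x, ∀ᶠ n in atTop, h n x = f x) ∧ (∀ n, support (h n) ⊆ support f) ∧
      (support f).Infinite := by
  have hconst : ∀ x, ∃ N, ∀ n ≥ N, h n x = h N x := by
    intro x
    by_cases hx : ∃ N, x ∈ support (h N)
    · obtain ⟨N, hN⟩ := hx
      exact ⟨N, fun n hn => apply_eq_of_mem_support_of_le hstep hvan hN hn⟩
    · simp only [not_exists] at hx
      exact ⟨0, fun n _ => by rw [notMem_support.1 (hx n), notMem_support.1 (hx 0)]⟩
  choose N hN using hconst
  let f : V → M := fun x => h (N x) x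
  have hsupp : ∀ n, support (h n) ⊆ support f := fun n x hx => by
    show h (N x) x ≠ 0
    rw [← hN x (max n (N x)) (le_max_right ..),
      apply_eq_of_mem_support_of_le hstep hvan hx (le_max_left ..)]
    exact hx
  choose y hy using fun n => ne_iff.1 (hd n)
  have hy_out : ∀ n, y n ∉ support (h n) := fun n hmem => hy n (hvan n _ hmem)
  have hy_in : ∀ n, y n ∈ support (h (n + 1)) := fun n => by
    rw [mem_support, hstep, Pi.add_apply, notMem_support.1 (hy_out n), zero_add]
    exact hy n
  have hinj : Injective y := .of_lt_imp_ne fun a b hab heq => hy_out b <| by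
    rw [← heq, mem_support, apply_eq_of_mem_support_of_le hstep hvan (hy_in a) hab]
    exact hy_in a
  exact ⟨f, fun x => eventually_atTop.2 ⟨N x, hN x⟩, hsupp,
    Set.infinite_of_injective_forall_mem hinj fun n => hsupp _ (hy_in n)⟩

theorem exists_limit_with_infinite_support {W : AddSubmonoid (V → M)}
    (hnew : ∀ g ∈ W, ∃ g' ∈ W, g' ≠ 0 ∧ ∀ x ∈ support g, g' x = 0) {g₀ : V → M}
    (hg₀ : g₀ ∈ W) :
    ∃ f : V → M, ∃ h : ℕ → V → M, (∀ n, h n ∈ W) ∧ (∀ x, ∀ᶠ n in atTop, h n x = f x) ∧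
      support g₀ ⊆ support f ∧ (support f).Infinite := by
  choose next hnextW hnext0 hnextvan using hnew
  let seq : ℕ → W := fun n => Nat.rec ⟨g₀, hg₀⟩ (fun _ g => g + ⟨next g g.2, hnextW g g.2⟩) n
  obtain ⟨f, hlim, hsupp, hinf⟩ := exists_limit_of_disjoint_increments
    (h := fun n => (seq n).1) (d := fun n => next (seq n).1 (seq n).2) (fun _ => rfl)
    (fun n => hnextvan _ (seq n).2) (fun n => hnext0 _ (seq n).2)
  exact ⟨f, fun n => (seq n).1, fun n => (seq n).2, hlim, hsupp 0, hinf⟩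

end Increments

theorem stmt18 {V F : Type*} (G : SimpleGraph V) [G.LocallyFinite] [Field F]
    (l : F) {I : Type*} (X : I → Finset V)
    (hinf : (⋃ i, (X i : Set V)).Infinite)
    (hex : ∀ i, ∃ f : V → F, IsEigenfun G l f ∧ support f = (X i : Set V)) :
    ∀ v ∈ ⋃ i, (X i : Set V), ∃ f : V → F, IsEigenfun G l f ∧
      (support f).Infinite ∧ v ∈ support f ∧ support f ⊆ ⋃ i, (X i : Set V) := by
  intro v hv
  choose φ hφ hsupp using hex
  set U := ⋃ i, (X i : Set V)
  let W := span F (Set.range φ)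
  have hWeig : W ≤ (adjEnd G F).eigenspace l := span_le.2 <| Set.range_subset_iff.2 fun i =>
    ((isEigenfun_iff_hasEigenvector G).1 (hφ i)).1
  have hWsupp : W ≤ finitelySupportedIn U := span_le.2 <| Set.range_subset_iff.2 fun i =>
    ⟨hsupp i ▸ (X i).finite_toSet, hsupp i ▸ Set.subset_iUnion (fun i => (X i : Set V)) i⟩
  have hfresh : ∀ g ∈ W, ∃ g' ∈ W, g' ≠ 0 ∧ ∀ x ∈ support g, g' x = 0 := fun g hg =>
    exists_ne_zero_mem_span_eqOn_zero (fun g' hg' => (hWsupp (subset_span hg')).1)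
      (by simpa [Set.biUnion_range, hsupp] using hinf) (hWsupp hg).1
  obtain ⟨i, hi⟩ := Set.mem_iUnion.1 hv
  obtain ⟨f, h, hhW, hlim, hsub, hfinf⟩ := exists_limit_with_infinite_support
    (W := W.toAddSubmonoid) hfresh (subset_span ⟨i, rfl⟩ : φ i ∈ W)
  have hfv : v ∈ support f := hsub (hsupp i ▸ hi)
  have hfeig : f ∈ (adjEnd G F).eigenspace l :=
    mem_eigenspace_of_eventually_eq G (fun n => hWeig (hhW n)) hlim
  refine ⟨f, (isEigenfun_iff_hasEigenvector G).2 ⟨hfeig, fun h0 => hfv (congrFun h0 v)⟩,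
    hfinf, hfv, fun x hx => ?_⟩
  obtain ⟨n, hn⟩ := (hlim x).exists
  exact (hWsupp (hhW n)).2 (by rwa [mem_support, hn])
end
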